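/- arXiv:1704.05007 — 2 statements merged into one kernel-verified Lean document; each statement's English description precedes it below -/
import Mathlib

section
/- With α* = SNR·hᴴa/(1+SNR‖h‖²) the minimum of g(α) = |α|²σ² + P‖αh−a‖² equals σ²·aᴴMa·SNR, i.e., P/g(α*) = 1/(aᴴMa), where M = I_L − (SNR/(SNR‖h‖²+1))·h hᴴ. -/
/-!
Writing `P = SNR·σ²` and completing the square in `α` gives
`|α|²σ² + P‖αh − a‖² = σ²(1 + SNR‖h‖²)·|α − α*|² + P·(‖a‖² − SNR·|hᴴa|²/(1 + SNR‖h‖²))`,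
and the last bracket is `aᴴMa` since `hhᴴ` acts on `a` as `(hᴴa)·h`.
So `α*` attains the value `P·aᴴMa`, which is the minimum.
-/

open Matrix ComplexConjugate

section
variable {ι : Type*} [Fintype ι]

lemma re_star_dotProduct_self (a : ι → ℂ) : (star a ⬝ᵥ a).re = ∑ l, ‖a l‖ ^ 2 := by
  simp only [dotProduct, Pi.star_apply, Complex.star_def, Complex.conj_mul', Complex.re_sum]
  norm_cast

lemma re_star_dotProduct_one_sub_smul_vecMulVec_mulVec [DecidableEq ι] (t : ℝ) (h a : ι → ℂ) :
    (star a ⬝ᵥ (1 - (t : ℂ) • vecMulVec h (star h)) *ᵥ a).re =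
      ∑ l, ‖a l‖ ^ 2 - t * ‖star h ⬝ᵥ a‖ ^ 2 := by
  have hproj : star a ⬝ᵥ vecMulVec h (star h) *ᵥ a = ‖star h ⬝ᵥ a‖ ^ 2 := by
    rw [vecMulVec_mulVec, op_smul_eq_smul, dotProduct_smul, star_dotProduct, smul_eq_mul,
      Complex.star_def, Complex.conj_mul', Complex.norm_conj]
  rw [sub_mulVec, one_mulVec, dotProduct_sub, smul_mulVec, dotProduct_smul, hproj, smul_eq_mul,
    Complex.sub_re, re_star_dotProduct_self]
  norm_cast

lemma sum_sq_norm_mul_sub (α : ℂ) (h a : ι → ℂ) :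
    ∑ l, ‖α * h l - a l‖ ^ 2 =
      ‖α‖ ^ 2 * ∑ l, ‖h l‖ ^ 2 - 2 * (conj α * (star h ⬝ᵥ a)).re + ∑ l, ‖a l‖ ^ 2 := by
  have hterm : ∀ l, ‖α * h l - a l‖ ^ 2 =
      ‖α‖ ^ 2 * ‖h l‖ ^ 2 - 2 * (conj α * (conj (h l) * a l)).re + ‖a l‖ ^ 2 := by
    intro l
    rw [@norm_sub_sq ℂ, RCLike.inner_apply', norm_mul, mul_pow, map_mul (starRingEnd ℂ),
      mul_assoc, RCLike.re_to_complex]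
  simp only [hterm, Finset.sum_add_distrib, Finset.sum_sub_distrib, ← Finset.mul_sum,
    ← Complex.re_sum]
  rfl

end

lemma complete_square_sq_norm (s σ2 n A : ℝ) (α b : ℂ) (hc : 1 + s * n ≠ 0) :
    ‖α‖ ^ 2 * σ2 + s * σ2 * (‖α‖ ^ 2 * n - 2 * (conj α * b).re + A) =
      σ2 * (1 + s * n) * ‖α - s * b / (1 + s * n)‖ ^ 2 +
        s * σ2 * (A - s / (1 + s * n) * ‖b‖ ^ 2) := by
  have hβ : s * b / (1 + s * n) = ((s / (1 + s * n) : ℝ) : ℂ) * b := by push_cast; ring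
  rw [hβ, @norm_sub_sq ℂ, RCLike.inner_apply', norm_mul, mul_pow, Complex.norm_real,
    Real.norm_eq_abs, sq_abs, mul_left_comm, RCLike.re_to_complex, Complex.re_ofReal_mul]
  field_simp
  ring

/-- With α* = SNR·hᴴa/(1+SNR‖h‖²), the minimum of g(α) = |α|²σ² + P‖αh−a‖²
equals P·(aᴴMa), where M = I − (SNR/(1+SNR‖h‖²))·h hᴴ. -/
theorem stmt11 (L : ℕ) (P σ2 : ℝ) (hP : 0 < P) (hσ : 0 < σ2)
    (h a : Fin L → ℂ) :
    let SNR := P / σ2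
    let hna : ℂ := ∑ l, (starRingEnd ℂ) (h l) * a l
    let hn2 : ℝ := ∑ l, ‖h l‖ ^ 2
    let αstar : ℂ := (SNR : ℂ) * hna / (1 + SNR * hn2)
    let M : Matrix (Fin L) (Fin L) ℂ :=
      1 - ((SNR / (1 + SNR * hn2) : ℝ) : ℂ) • Matrix.vecMulVec h (star h)
    ‖αstar‖ ^ 2 * σ2 + P * (∑ l, ‖αstar * h l - a l‖ ^ 2) =
      P * (star a ⬝ᵥ M.mulVec a).re := by
  intro SNR hna hn2 αstar M
  have hP_eq : P = SNR * σ2 := (div_mul_cancel₀ P hσ.ne').symm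
  have hc : 1 + SNR * hn2 ≠ 0 := by positivity
  have hαstar : αstar = SNR * (star h ⬝ᵥ a) / (1 + SNR * hn2) := rfl
  rw [show M = 1 - ((SNR / (1 + SNR * hn2) : ℝ) : ℂ) • vecMulVec h (star h) from rfl,
    re_star_dotProduct_one_sub_smul_vecMulVec_mulVec, sum_sq_norm_mul_sub, hP_eq,
    complete_square_sq_norm SNR σ2 hn2 _ αstar _ hc, hαstar, sub_self, norm_zero]
  ring
end

section
/- For any nonzero a ∈ ℤ[i]^L achieving positive computation rate, ‖a‖² ≤ 1 + SNR‖h‖², i.e., the optimal coefficient vector satisfies ‖a_opt‖ ≤ √(1+SNR‖h‖²). -/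
open scoped Matrix

/-!
Expanding the rank-one term, `aᴴ (1 - c • h hᴴ) a = ‖a‖² - c ‖hᴴ a‖²`, and Cauchy–Schwarz
`‖hᴴ a‖² ≤ ‖h‖² ‖a‖²` bounds this below by `(1 - c ‖h‖²) ‖a‖²`. For `c = SNR / (1 + SNR ‖h‖²)`
the factor is `1 / (1 + SNR ‖h‖²)`, the smallest eigenvalue of `M` (attained along `h`), so
`aᴴ M a < 1` forces `‖a‖² < 1 + SNR ‖h‖²`.
-/

namespace Matrix

variable {𝕜 ι : Type*} [RCLike 𝕜] [Fintype ι]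

theorem star_dotProduct_eq_inner_toLp (h a : ι → 𝕜) :
    star h ⬝ᵥ a = inner 𝕜 (WithLp.toLp 2 h) (WithLp.toLp 2 a) := by
  rw [EuclideanSpace.inner_toLp_toLp, dotProduct_comm]

theorem re_star_dotProduct_self (a : ι → 𝕜) : RCLike.re (star a ⬝ᵥ a) = ∑ i, ‖a i‖ ^ 2 := by
  rw [star_dotProduct_eq_inner_toLp, inner_self_eq_norm_sq, EuclideanSpace.norm_sq_eq]

theorem norm_star_dotProduct_sq_le (h a : ι → 𝕜) :
    ‖star h ⬝ᵥ a‖ ^ 2 ≤ (∑ i, ‖h i‖ ^ 2) * ∑ i, ‖a i‖ ^ 2 := by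
  rw [star_dotProduct_eq_inner_toLp, ← EuclideanSpace.norm_sq_eq (WithLp.toLp 2 h),
    ← EuclideanSpace.norm_sq_eq (WithLp.toLp 2 a), ← mul_pow]
  gcongr
  exact norm_inner_le_norm _ _

theorem star_dotProduct_vecMulVec_mulVec (h a : ι → 𝕜) :
    star a ⬝ᵥ vecMulVec h (star h) *ᵥ a = star (star h ⬝ᵥ a) * (star h ⬝ᵥ a) := by
  rw [vecMulVec_mulVec, star_dotProduct]
  simp only [dotProduct, Pi.star_apply, star_sum, star_mul', star_star, Pi.smul_apply,
    op_smul_eq_mul, Finset.sum_mul]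
  exact Finset.sum_congr rfl fun _ _ => by ring

variable [DecidableEq ι]

theorem re_star_dotProduct_one_sub_smul_vecMulVec_mulVec (c : ℝ) (h a : ι → 𝕜) :
    RCLike.re (star a ⬝ᵥ ((1 : Matrix ι ι 𝕜) - (c : 𝕜) • vecMulVec h (star h)) *ᵥ a) =
      ∑ i, ‖a i‖ ^ 2 - c * ‖star h ⬝ᵥ a‖ ^ 2 := by
  rw [sub_mulVec, one_mulVec, smul_mulVec, dotProduct_sub, dotProduct_smul,
    star_dotProduct_vecMulVec_mulVec, map_sub, re_star_dotProduct_self, RCLike.star_def,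
    RCLike.conj_mul, smul_eq_mul, ← RCLike.ofReal_pow, ← RCLike.ofReal_mul, RCLike.ofReal_re]

theorem le_re_star_dotProduct_one_sub_smul_vecMulVec_mulVec {c : ℝ} (hc : 0 ≤ c) (h a : ι → 𝕜) :
    (1 - c * ∑ i, ‖h i‖ ^ 2) * ∑ i, ‖a i‖ ^ 2 ≤
      RCLike.re (star a ⬝ᵥ ((1 : Matrix ι ι 𝕜) - (c : 𝕜) • vecMulVec h (star h)) *ᵥ a) := by
  rw [re_star_dotProduct_one_sub_smul_vecMulVec_mulVec]
  nlinarith [mul_le_mul_of_nonneg_left (norm_star_dotProduct_sq_le h a) hc]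

end Matrix

theorem stmt13_general (L : ℕ) (SNR : ℝ) (hSNR : 0 < SNR) (h : Fin L → ℂ)
    (a : Fin L → ℂ)
    (hrate :
      (star a ⬝ᵥ
        ((1 : Matrix (Fin L) (Fin L) ℂ) -
          ((SNR / (1 + SNR * ∑ l, ‖h l‖ ^ 2) : ℝ) : ℂ) •
            Matrix.vecMulVec h (star h)).mulVec a).re < 1) :
    ∑ l, ‖a l‖ ^ 2 ≤ 1 + SNR * ∑ l, ‖h l‖ ^ 2 := by
  set N := ∑ l, ‖h l‖ ^ 2
  have hD : 0 < 1 + SNR * N := by positivity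
  have hbound := Matrix.le_re_star_dotProduct_one_sub_smul_vecMulVec_mulVec
    (div_nonneg hSNR.le hD.le) h a
  have hfactor : 1 - SNR / (1 + SNR * N) * N = 1 / (1 + SNR * N) := by
    field_simp
    ring
  rw [hfactor, one_div_mul_eq_div] at hbound
  exact ((div_lt_one hD).mp (hbound.trans_lt hrate)).le

/-- Any nonzero Gaussian-integer coefficient vector a achieving positive
computation rate (i.e. aᴴMa < 1) satisfies ‖a‖² ≤ 1 + SNR‖h‖². -/
theorem stmt13 (L : ℕ) (SNR : ℝ) (hSNR : 0 < SNR) (h : Fin L → ℂ)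
    (a : Fin L → ℂ) (ha0 : a ≠ 0)
    (hGauss : ∀ l, ∃ m n : ℤ, a l = (m : ℂ) + (n : ℂ) * Complex.I)
    (hrate :
      (star a ⬝ᵥ
        ((1 : Matrix (Fin L) (Fin L) ℂ) -
          ((SNR / (1 + SNR * ∑ l, ‖h l‖ ^ 2) : ℝ) : ℂ) •
            Matrix.vecMulVec h (star h)).mulVec a).re < 1) :
    ∑ l, ‖a l‖ ^ 2 ≤ 1 + SNR * ∑ l, ‖h l‖ ^ 2 :=
  stmt13_general L SNR hSNR h a hrate
end
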